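/- Let δ > 0 and let c be holomorphic on an open neighborhood of the closed strip {z ∈ ℂ : |Im z| ≤ δ}, 1-periodic (c(z+1) = c(z)), with c(z) ≠ 0 for all z with |Im z| ≤ δ. Then the function I_ε(c) := ∫₀¹ log|c(x+iε)| dx is affine in ε on [−δ, δ] with slope in 2πℤ: there exist k ∈ ℤ and d ∈ ℝ such that ∫₀¹ log|c(x+iε)| dx = 2πk·ε + d for all ε ∈ [−δ, δ]. -/

import Mathlib

open Complex MeasureTheory Set intervalIntegral
open scoped Real Interval

/-!
Since `c` has no zeros on the strip, `L = c'/c` is holomorphic there and 1-periodic, and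
`∂/∂ε log |c(x + iε)| = -Im L(x + iε)`. Integrating over the rectangle `[0, 1] × [0, ε]` and
swapping the integrals, `I_ε - I_0 = -∫₀^ε Im ∫₀¹ L(x + is) dx ds`. By Cauchy's theorem on
`[0, 1] × [0, s]`, whose vertical sides cancel by periodicity, the inner integral does not
depend on `s`; at `s = 0` it is the change of a logarithm of `c` over one period, so it lies
in `2πiℤ`.
-/

lemma hasDerivAt_log_norm {g : ℝ → ℂ} {g' : ℂ} {t : ℝ} (hg : HasDerivAt g g' t)
    (h0 : g t ≠ 0) : HasDerivAt (fun s => Real.log ‖g s‖) (g' / g t).re t := by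
  have hsq : (fun s => Real.log ‖g s‖) = fun s => Real.log (‖g s‖ ^ 2) / 2 := by
    funext s
    rw [Real.log_pow]
    ring
  rw [hsq]
  refine ((hg.norm_sq.log (by positivity)).div_const 2).congr_deriv ?_
  rw [Complex.inner, Complex.div_re, ← Complex.normSq_eq_norm_sq]
  simp only [Complex.mul_re, Complex.conj_re, Complex.conj_im]
  field_simp
  ring

lemma exp_integral_div_eq_div {f f' : ℝ → ℂ} (hf : ∀ t, HasDerivAt f (f' t) t)
    (hf' : Continuous f') (h0 : ∀ t, f t ≠ 0) (a b : ℝ) :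
    exp (∫ t in a..b, f' t / f t) = f b / f a := by
  have hcont : Continuous fun t => f' t / f t :=
    hf'.div (continuous_iff_continuousAt.2 fun t => (hf t).continuousAt) h0
  set p : ℝ → ℂ := fun s => ∫ t in a..s, f' t / f t
  have hp : ∀ s, HasDerivAt p (f' s / f s) s := fun s =>
    hcont.integral_hasStrictDerivAt a s |>.hasDerivAt
  have hconst : ∀ s, HasDerivAt (fun s => f s * exp (-p s)) 0 s := by
    intro s
    refine ((hf s).mul (hp s).neg.cexp).congr_deriv ?_
    simp only [Pi.neg_apply]
    field_simp [h0 s]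
    ring
  have hab : f b * exp (-p b) = f a * exp (-p a) :=
    is_const_of_deriv_eq_zero (fun s => (hconst s).differentiableAt)
      (fun s => (hconst s).deriv) b a
  simp only [p, integral_same, neg_zero, exp_zero, mul_one, exp_neg] at hab
  field_simp [h0 a] at hab ⊢
  exact hab.symm

lemma hasDerivAt_comp_add_ofReal {f : ℂ → ℂ} {z : ℂ} (hz : DifferentiableAt ℂ f z) :
    HasDerivAt (fun t : ℝ => f (z + t)) (deriv f z) 0 := by
  have h : HasDerivAt f (deriv f z) (z + ((0 : ℝ) : ℂ)) := by simpa using hz.hasDerivAt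
  exact (h.comp_const_add z _).comp_ofReal

lemma deriv_eq_of_forall_add_ofReal_eq {f : ℂ → ℂ} {z w : ℂ} (hz : DifferentiableAt ℂ f z)
    (hw : DifferentiableAt ℂ f w) (h : ∀ t : ℝ, f (z + t) = f (w + t)) :
    deriv f z = deriv f w :=
  (hasDerivAt_comp_add_ofReal hz).unique <| by
    simpa only [h] using hasDerivAt_comp_add_ofReal hw

lemma integral_add_mul_I_eq_of_periodic {f : ℂ → ℂ} {ε : ℝ}
    (hf : DifferentiableOn ℂ f ([[0, 1]] ×ℂ [[0, ε]]))
    (hper : ∀ y ∈ [[0, ε]], f (1 + y * I) = f (y * I)) :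
    ∫ x : ℝ in 0..1, f (x + ε * I) = ∫ x : ℝ in 0..1, f x := by
  have hrect := integral_boundary_rect_eq_zero_of_differentiableOn f 0 (1 + ε * I)
    (by simpa using hf)
  have hsides : ∫ y : ℝ in 0..ε, f (1 + y * I) = ∫ y : ℝ in 0..ε, f (y * I) :=
    integral_congr hper
  simp only [zero_re, zero_im, add_re, add_im, one_re, one_im, mul_re, mul_im, ofReal_re,
    ofReal_im, I_re, I_im, ofReal_zero, ofReal_one, zero_mul, zero_add, add_zero, mul_zero,
    sub_zero, mul_one, hsides] at hrect
  linear_combination -hrect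

lemma integral_sub_integral_eq_integral_integral_of_hasDerivAt {E : Type*}
    [NormedAddCommGroup E] [NormedSpace ℝ E] [CompleteSpace E] {Φ ψ : ℝ → ℝ → E}
    {a b s₀ s₁ : ℝ} (hΦ : ∀ x ∈ [[a, b]], ∀ s ∈ [[s₀, s₁]], HasDerivAt (Φ x) (ψ x s) s)
    (hψ : ContinuousOn (Function.uncurry ψ) ([[a, b]] ×ˢ [[s₀, s₁]]))
    (h₀ : IntervalIntegrable (Φ · s₀) volume a b) (h₁ : IntervalIntegrable (Φ · s₁) volume a b) :
    (∫ x in a..b, Φ x s₁) - ∫ x in a..b, Φ x s₀ = ∫ s in s₀..s₁, ∫ x in a..b, ψ x s := by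
  have hint : IntegrableOn (Function.uncurry ψ) ([[a, b]] ×ˢ [[s₀, s₁]]) :=
    hψ.integrableOn_compact (isCompact_uIcc.prod isCompact_uIcc)
  rw [← intervalIntegral_intervalIntegral_swap
    (hint.mono_set (prod_mono uIoc_subset_uIcc uIoc_subset_uIcc)), ← integral_sub h₁ h₀]
  refine integral_congr fun x hx => (integral_eq_sub_of_hasDerivAt (hΦ x hx) ?_).symm
  exact (hψ.comp (Continuous.prodMk_right x).continuousOn fun s hs => ⟨hx, hs⟩).intervalIntegrable

lemma abs_le_abs_of_mem_uIcc_zero {s ε : ℝ} (hs : s ∈ [[0, ε]]) : |s| ≤ |ε| := by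
  simpa using abs_sub_left_of_mem_uIcc hs

/-- The integral `I_ε(c)`. -/
noncomputable def logIntegral (c : ℂ → ℂ) (ε : ℝ) : ℝ :=
  ∫ x in (0 : ℝ)..1, Real.log ‖c (x + ε * I)‖

section Strip

variable {c : ℂ → ℂ} {δ : ℝ}

lemma AnalyticAt.differentiableAt_logDeriv {z : ℂ} (hc : AnalyticAt ℂ c z) (h0 : c z ≠ 0) :
    DifferentiableAt ℂ (logDeriv c) z :=
  hc.deriv.differentiableAt.div hc.differentiableAt h0

lemma logDeriv_add_one (hc : ∀ z : ℂ, |z.im| ≤ δ → AnalyticAt ℂ c z)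
    (hper : ∀ z : ℂ, |z.im| ≤ δ → c (z + 1) = c z) {z : ℂ} (hz : |z.im| ≤ δ) :
    logDeriv c (z + 1) = logDeriv c z := by
  have hderiv : deriv c (z + 1) = deriv c z :=
    deriv_eq_of_forall_add_ofReal_eq (hc _ (by simpa using hz)).differentiableAt
      (hc z hz).differentiableAt fun t => by
        rw [add_right_comm, hper _ (by simpa using hz)]
  rw [logDeriv_apply, logDeriv_apply, hderiv, hper z hz]

lemma integral_logDeriv_add_mul_I (hc : ∀ z : ℂ, |z.im| ≤ δ → AnalyticAt ℂ c z)
    (hper : ∀ z : ℂ, |z.im| ≤ δ → c (z + 1) = c z) (hnz : ∀ z : ℂ, |z.im| ≤ δ → c z ≠ 0)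
    {ε : ℝ} (hε : |ε| ≤ δ) :
    ∫ x : ℝ in 0..1, logDeriv c (x + ε * I) = ∫ x : ℝ in 0..1, logDeriv c x := by
  refine integral_add_mul_I_eq_of_periodic (fun z hz => ?_) fun y hy => ?_
  · have hz' : |z.im| ≤ δ := (abs_le_abs_of_mem_uIcc_zero hz.2).trans hε
    exact ((hc z hz').differentiableAt_logDeriv (hnz z hz')).differentiableWithinAt
  · rw [add_comm]
    exact logDeriv_add_one hc hper (by simpa using (abs_le_abs_of_mem_uIcc_zero hy).trans hε)

lemma exists_integral_logDeriv_eq_int_mul (hc : ∀ z : ℂ, |z.im| ≤ δ → AnalyticAt ℂ c z)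
    (hper : ∀ z : ℂ, |z.im| ≤ δ → c (z + 1) = c z) (hnz : ∀ z : ℂ, |z.im| ≤ δ → c z ≠ 0)
    (hδ : 0 ≤ δ) : ∃ n : ℤ, ∫ x : ℝ in 0..1, logDeriv c x = n * (2 * π * I) := by
  have hreal : ∀ t : ℝ, |(t : ℂ).im| ≤ δ := fun t => by simpa using hδ
  have hexp := exp_integral_div_eq_div (f := fun t : ℝ => c t) (f' := fun t => deriv c t)
    (fun t => (hc t (hreal t)).differentiableAt.hasDerivAt.comp_ofReal)
    (continuous_iff_continuousAt.2 fun t =>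
      (hc t (hreal t)).deriv.continuousAt.comp continuous_ofReal.continuousAt)
    (fun t => hnz t (hreal t)) 0 1
  have hc1 : c 1 = c 0 := by simpa using hper 0 (by simpa using hδ)
  simp only [ofReal_one, ofReal_zero, hc1, div_self (hnz 0 (by simpa using hδ))] at hexp
  exact exp_eq_one_iff.1 hexp

lemma hasDerivAt_log_norm_add_mul_I {x s : ℝ} (hc : DifferentiableAt ℂ c (x + s * I))
    (h0 : c (x + s * I) ≠ 0) :
    HasDerivAt (fun s : ℝ => Real.log ‖c (x + s * I)‖) (-(logDeriv c (x + s * I)).im) s := by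
  have hvert : HasDerivAt (fun u : ℂ => (x : ℂ) + u * I) I s := by
    simpa using ((hasDerivAt_id (s : ℂ)).mul_const I).const_add (x : ℂ)
  have hline : HasDerivAt (fun u : ℂ => c (x + u * I)) (deriv c (x + s * I) * I) s :=
    hc.hasDerivAt.comp (s : ℂ) hvert
  refine (hasDerivAt_log_norm hline.comp_ofReal h0).congr_deriv ?_
  rw [mul_div_right_comm, mul_I_re, logDeriv_apply]

lemma logIntegral_sub_logIntegral_zero (hc : ∀ z : ℂ, |z.im| ≤ δ → AnalyticAt ℂ c z)
    (hper : ∀ z : ℂ, |z.im| ≤ δ → c (z + 1) = c z) (hnz : ∀ z : ℂ, |z.im| ≤ δ → c z ≠ 0)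
    {ε : ℝ} (hε : |ε| ≤ δ) :
    logIntegral c ε - logIntegral c 0 = -(∫ x : ℝ in 0..1, logDeriv c x).im * ε := by
  have hmem : ∀ (x : ℝ), ∀ s ∈ [[0, ε]], |((x : ℂ) + s * I).im| ≤ δ := fun x s hs => by
    simpa using (abs_le_abs_of_mem_uIcc_zero hs).trans hε
  have hint : ∀ s ∈ [[0, ε]],
      IntervalIntegrable (fun x : ℝ => Real.log ‖c (x + s * I)‖) volume 0 1 := fun s hs =>
    (continuous_iff_continuousAt.2 fun x =>
      (((hc _ (hmem x s hs)).continuousAt.comp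
        (f := fun x : ℝ => (x : ℂ) + s * I) (by fun_prop)).norm.log
        (norm_ne_zero_iff.2 (hnz _ (hmem x s hs))))).intervalIntegrable 0 1
  have hL : ContinuousOn (fun p : ℝ × ℝ => logDeriv c (p.1 + p.2 * I)) ([[0, 1]] ×ˢ [[0, ε]]) :=
    fun p hp => ContinuousAt.continuousWithinAt <|
      ((hc _ (hmem p.1 p.2 hp.2)).differentiableAt_logDeriv
        (hnz _ (hmem p.1 p.2 hp.2))).continuousAt.comp
        (f := fun p : ℝ × ℝ => (p.1 : ℂ) + p.2 * I) (by fun_prop)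
  have hcont : ContinuousOn (Function.uncurry fun (x s : ℝ) => -(logDeriv c (x + s * I)).im)
      ([[0, 1]] ×ˢ [[0, ε]]) :=
    (continuous_im.comp_continuousOn hL).neg
  calc logIntegral c ε - logIntegral c 0
      = ∫ s in (0 : ℝ)..ε, ∫ x in (0 : ℝ)..1, -(logDeriv c (x + s * I)).im :=
        integral_sub_integral_eq_integral_integral_of_hasDerivAt
          (fun x _ s hs => hasDerivAt_log_norm_add_mul_I (hc _ (hmem x s hs)).differentiableAt
            (hnz _ (hmem x s hs))) hcont (hint 0 left_mem_uIcc) (hint ε right_mem_uIcc)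
    _ = ∫ s in (0 : ℝ)..ε, -(∫ x : ℝ in 0..1, logDeriv c x).im := integral_congr fun s hs => by
        have hLs : IntervalIntegrable (fun x : ℝ => logDeriv c (x + s * I)) volume 0 1 :=
          (hL.comp (Continuous.prodMk_left s).continuousOn
            fun x hx => ⟨hx, hs⟩).intervalIntegrable
        rw [intervalIntegral.integral_neg, ← integral_logDeriv_add_mul_I hc hper hnz
          ((abs_le_abs_of_mem_uIcc_zero hs).trans hε)]
        exact congrArg _ (imCLM.intervalIntegral_comp_comm hLs)
    _ = -(∫ x : ℝ in 0..1, logDeriv c x).im * ε := by simp [mul_comm]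

end Strip

/-- If `c` is 1-periodic, holomorphic on a neighborhood of the closed strip
`|Im z| ≤ δ` and nonvanishing there, then `ε ↦ ∫₀¹ log |c(x+iε)| dx` is affine on `[-δ, δ]`
with slope in `2πℤ`. -/
theorem logIntegral_affine_of_nonvanishing
    (δ : ℝ) (hδ : 0 < δ) (c : ℂ → ℂ)
    (hc : ∃ U : Set ℂ, IsOpen U ∧ {z : ℂ | |z.im| ≤ δ} ⊆ U ∧ DifferentiableOn ℂ c U)
    (hper : ∀ z : ℂ, |z.im| ≤ δ → c (z + 1) = c z)
    (hnz : ∀ z : ℂ, |z.im| ≤ δ → c z ≠ 0) :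
    ∃ (k : ℤ) (d : ℝ), ∀ ε ∈ Set.Icc (-δ) δ,
      (∫ x in (0:ℝ)..1, Real.log ‖c ((x : ℂ) + (ε : ℂ) * Complex.I)‖) =
        2 * π * k * ε + d := by
  obtain ⟨U, hUo, hSU, hcU⟩ := hc
  have han : ∀ z : ℂ, |z.im| ≤ δ → AnalyticAt ℂ c z := fun z hz =>
    hcU.analyticAt (hUo.mem_nhds (hSU hz))
  obtain ⟨n, hn⟩ := exists_integral_logDeriv_eq_int_mul han hper hnz hδ.le
  refine ⟨-n, logIntegral c 0, fun ε hε => ?_⟩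
  have h := logIntegral_sub_logIntegral_zero han hper hnz (abs_le.2 hε)
  have him : (∫ x : ℝ in 0..1, logDeriv c x).im = 2 * π * n := by
    simp [hn]
    ring
  rw [him] at h
  change logIntegral c ε = _
  push_cast
  linarith
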